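/- Let n, d, r be positive integers and p ≥ r an integer, F ∈ ℝ^{n×d}, λ > 0, X_* ∈ ℝ^{d×r}, and ε ∈ ℝⁿ; set y := |F X_*| + ε and assume y_i ≥ 0 for all i. Assume there exists U_* ∈ ℝ^{n×r} with unit-norm rows and F X_* = diag(|F X_*|) U_*. Let M_λ := λ · diag(y)(nλ I_n + F Fᵀ)^{-1} diag(y) and R_λ := (nλ I_d + Fᵀ F)^{-1} Fᵀ diag(y). If U ∈ ℝ^{n×p} is a global minimizer of U ↦ ⟨M_λ, U Uᵀ⟩ over all matrices in ℝ^{n×p} with unit-norm rows, then X := R_λ U satisfies: (1/n)‖α(X) − α(X_*)‖² ≤ (2/n)⟨ε, α(X) − α(X_*)⟩ + λ(‖X_*‖² − ‖X‖²), where α(X) := |F X| and α(X_*) := |F X_*|. -/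

import Mathlib

open Matrix Filter Finset
open scoped Classical

noncomputable section

/-- Frobenius inner product `⟨A, B⟩ = tr(Bᵀ A)` of real square matrices. -/
def mip {d : ℕ} (A B : Matrix (Fin d) (Fin d) ℝ) : ℝ := (Bᵀ * A).trace

/-- Squared Frobenius norm of a real matrix. -/
def frobSq {m p : ℕ} (X : Matrix (Fin m) (Fin p) ℝ) : ℝ := ∑ i, ∑ j, (X i j) ^ 2

/-- Squared Euclidean norm of a real vector. -/
def vnormSq {n : ℕ} (v : Fin n → ℝ) : ℝ := ∑ i, (v i) ^ 2

/-- Euclidean norm of a real vector. -/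
def vnorm {n : ℕ} (v : Fin n → ℝ) : ℝ := Real.sqrt (vnormSq v)

/-- Euclidean inner product of real vectors. -/
def vip {n : ℕ} (u v : Fin n → ℝ) : ℝ := ∑ i, u i * v i

/-- `ddiag A` keeps the diagonal of `A`, setting off-diagonal entries to zero. -/
def ddiag {n : ℕ} (A : Matrix (Fin n) (Fin n) ℝ) : Matrix (Fin n) (Fin n) ℝ :=
  Matrix.diagonal fun i => A i i

/-- `rowNorms M` is the vector of Euclidean norms of the rows of `M` (`|M|`). -/
def rowNorms {n k : ℕ} (M : Matrix (Fin n) (Fin k) ℝ) : Fin n → ℝ :=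
  fun i => Real.sqrt (∑ j, (M i j) ^ 2)

/-! ### Auxiliary lemmas -/

/-- Frobenius inner product of rectangular matrices as a double sum. -/
def fip {m q : ℕ} (A B : Matrix (Fin m) (Fin q) ℝ) : ℝ := ∑ i, ∑ j, A i j * B i j

lemma fip_eq_trace {m q : ℕ} (A B : Matrix (Fin m) (Fin q) ℝ) : fip A B = (Bᵀ * A).trace := by
  simp only [fip, Matrix.trace, Matrix.diag, Matrix.mul_apply, Matrix.transpose_apply]
  rw [Finset.sum_comm]
  exact Finset.sum_congr rfl fun i _ => Finset.sum_congr rfl fun j _ => by ring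

lemma fip_comm {m q : ℕ} (A B : Matrix (Fin m) (Fin q) ℝ) : fip A B = fip B A := by
  simp [fip, mul_comm]

lemma fip_mul_left {m d q : ℕ} (M : Matrix (Fin m) (Fin d) ℝ) (A : Matrix (Fin d) (Fin q) ℝ)
    (B : Matrix (Fin m) (Fin q) ℝ) : fip (M * A) B = fip A (Mᵀ * B) := by
  rw [fip_eq_trace, fip_eq_trace, Matrix.transpose_mul, Matrix.transpose_transpose,
    Matrix.mul_assoc]

lemma fip_sq {m q : ℕ} (M : Matrix (Fin m) (Fin m) ℝ) (W W' : Matrix (Fin m) (Fin q) ℝ) :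
    fip (M * W) W' = fip M (W' * Wᵀ) := by
  rw [fip_eq_trace, fip_eq_trace, Matrix.transpose_mul, Matrix.transpose_transpose,
    ← Matrix.mul_assoc, Matrix.trace_mul_cycle]

lemma fip_smul_right {m q : ℕ} (c : ℝ) (A B : Matrix (Fin m) (Fin q) ℝ) :
    fip A (c • B) = c * fip A B := by
  simp only [fip, Matrix.smul_apply, smul_eq_mul, Finset.mul_sum]
  exact Finset.sum_congr rfl fun i _ => Finset.sum_congr rfl fun j _ => by ring

lemma fip_smul_left {m q : ℕ} (c : ℝ) (A B : Matrix (Fin m) (Fin q) ℝ) :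
    fip (c • A) B = c * fip A B := by
  rw [fip_comm, fip_smul_right, fip_comm]

lemma fip_sub_right {m q : ℕ} (A B C : Matrix (Fin m) (Fin q) ℝ) :
    fip A (B - C) = fip A B - fip A C := by
  simp [fip, mul_sub, Finset.sum_sub_distrib]

lemma fip_sub_left {m q : ℕ} (A B C : Matrix (Fin m) (Fin q) ℝ) :
    fip (A - B) C = fip A C - fip B C := by
  rw [fip_comm, fip_sub_right, fip_comm A C, fip_comm B C]

lemma frobSq_eq_fip {m q : ℕ} (A : Matrix (Fin m) (Fin q) ℝ) : frobSq A = fip A A := by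
  simp [frobSq, fip, sq]

lemma frobSq_nonneg {m q : ℕ} (A : Matrix (Fin m) (Fin q) ℝ) : 0 ≤ frobSq A :=
  Finset.sum_nonneg fun i _ => Finset.sum_nonneg fun j _ => sq_nonneg _

lemma frobSq_add {m q : ℕ} (A B : Matrix (Fin m) (Fin q) ℝ) :
    frobSq (A + B) = frobSq A + 2 * fip A B + frobSq B := by
  have h : ∀ i j, (A i j + B i j) ^ 2 = A i j ^ 2 + B i j ^ 2 + 2 * (A i j * B i j) := by
    intro i j; ring
  simp only [frobSq, fip, Matrix.add_apply, h, Finset.sum_add_distrib, Finset.mul_sum]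
  ring

/-- The key computation: the value of the regularized least-squares problem at its
minimizer `Z₀ = (nλI + FᵀF)⁻¹ Fᵀ B`, together with the optimality of `Z₀`. -/
lemma core {n d q : ℕ} (hn : 0 < n) (F : Matrix (Fin n) (Fin d) ℝ) {lam : ℝ} (hlam : 0 < lam)
    (B : Matrix (Fin n) (Fin q) ℝ) :
    (1 / (n:ℝ)) * frobSq (F * ((((n:ℝ) * lam) • (1 : Matrix (Fin d) (Fin d) ℝ) + Fᵀ * F)⁻¹ * Fᵀ * B) - B)
        + lam * frobSq ((((n:ℝ) * lam) • (1 : Matrix (Fin d) (Fin d) ℝ) + Fᵀ * F)⁻¹ * Fᵀ * B)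
      = lam * fip ((((n:ℝ) * lam) • (1 : Matrix (Fin n) (Fin n) ℝ) + F * Fᵀ)⁻¹ * B) B
    ∧ ∀ Z : Matrix (Fin d) (Fin q) ℝ,
      lam * fip ((((n:ℝ) * lam) • (1 : Matrix (Fin n) (Fin n) ℝ) + F * Fᵀ)⁻¹ * B) B
        ≤ (1 / (n:ℝ)) * frobSq (F * Z - B) + lam * frobSq Z := by
  have hn' : (0:ℝ) < n := by exact_mod_cast hn
  have hne : (n:ℝ) ≠ 0 := hn'.ne'
  set c : ℝ := (n:ℝ) * lam with hc
  have hcpos : 0 < c := mul_pos hn' hlam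
  set S : Matrix (Fin d) (Fin d) ℝ := c • 1 + Fᵀ * F with hS
  set T : Matrix (Fin n) (Fin n) ℝ := c • 1 + F * Fᵀ with hT
  set Z0 : Matrix (Fin d) (Fin q) ℝ := S⁻¹ * Fᵀ * B with hZ0
  have hSpd : S.PosDef := by
    apply Matrix.PosDef.add_posSemidef
    · rw [smul_one_eq_diagonal]; exact Matrix.posDef_diagonal_iff.mpr fun _ => hcpos
    · have := Matrix.posSemidef_conjTranspose_mul_self F
      rwa [Matrix.conjTranspose_eq_transpose_of_trivial] at this
  have hTpd : T.PosDef := by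
    apply Matrix.PosDef.add_posSemidef
    · rw [smul_one_eq_diagonal]; exact Matrix.posDef_diagonal_iff.mpr fun _ => hcpos
    · have := Matrix.posSemidef_self_mul_conjTranspose F
      rwa [Matrix.conjTranspose_eq_transpose_of_trivial] at this
  have hSdet : IsUnit S.det := hSpd.det_pos.ne'.isUnit
  have hTdet : IsUnit T.det := hTpd.det_pos.ne'.isUnit
  have hSS' : S * S⁻¹ = 1 := Matrix.mul_nonsing_inv _ hSdet
  have hTT : T⁻¹ * T = 1 := Matrix.nonsing_inv_mul _ hTdet
  have hTF : T * F = F * S := by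
    rw [hT, hS, Matrix.add_mul, Matrix.mul_add, Matrix.smul_mul, Matrix.mul_smul,
      Matrix.one_mul, Matrix.mul_one, Matrix.mul_assoc]
  have hFS : F * S⁻¹ = T⁻¹ * F := by
    have h1 : T⁻¹ * (T * F) * S⁻¹ = F * S⁻¹ := by
      rw [← Matrix.mul_assoc T⁻¹ T F, hTT, Matrix.one_mul]
    rw [← h1, hTF, Matrix.mul_assoc, Matrix.mul_assoc, hSS', Matrix.mul_one]
  have hFZ0 : F * Z0 = B - c • (T⁻¹ * B) := by
    have h1 : F * Z0 = F * S⁻¹ * Fᵀ * B := by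
      rw [hZ0, ← Matrix.mul_assoc, ← Matrix.mul_assoc]
    have h2 : F * Fᵀ = T - c • 1 := by rw [hT]; abel
    calc F * Z0 = T⁻¹ * F * Fᵀ * B := by rw [h1, hFS]
      _ = T⁻¹ * (T - c • 1) * B := by rw [Matrix.mul_assoc T⁻¹ F Fᵀ, h2]
      _ = B - c • (T⁻¹ * B) := by
          rw [Matrix.mul_sub, hTT, Matrix.mul_smul, Matrix.mul_one, Matrix.sub_mul,
            Matrix.one_mul, Matrix.smul_mul]
  have hFtG : Fᵀ * (F * Z0 - B) = (-c) • Z0 := by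
    have h1 : Fᵀ * F = S - c • 1 := by rw [hS]; abel
    have h3 : S * Z0 = Fᵀ * B := by
      rw [hZ0, ← Matrix.mul_assoc, ← Matrix.mul_assoc, hSS', Matrix.one_mul]
    have h2 : Fᵀ * (F * Z0) = Fᵀ * B - c • Z0 := by
      rw [← Matrix.mul_assoc, h1, Matrix.sub_mul, Matrix.smul_mul, Matrix.one_mul, h3]
    rw [Matrix.mul_sub, h2, neg_smul]
    abel
  have hval : (1/(n:ℝ)) * frobSq (F * Z0 - B) + lam * frobSq Z0 = lam * fip (T⁻¹ * B) B := by
    have e2 : fip (F * Z0) (F * Z0 - B) = (-c) * fip Z0 Z0 := by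
      rw [fip_mul_left, hFtG, fip_smul_right]
    have e4 : fip B (F * Z0) = fip B B - c * fip B (T⁻¹ * B) := by
      rw [hFZ0, fip_sub_right, fip_smul_right]
    have e5 : frobSq (F * Z0 - B) = c * fip B (T⁻¹ * B) - c * fip Z0 Z0 := by
      rw [frobSq_eq_fip, fip_sub_left, e2, fip_sub_right, e4]; ring
    rw [e5, frobSq_eq_fip Z0, fip_comm (T⁻¹ * B) B, hc]
    field_simp
    ring
  refine ⟨hval, fun Z => ?_⟩
  have hE : F * Z - B = F * (Z - Z0) + (F * Z0 - B) := by
    rw [Matrix.mul_sub]; abel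
  have h1 : frobSq (F * Z - B)
      = frobSq (F * (Z - Z0)) + 2 * fip (F * (Z - Z0)) (F * Z0 - B) + frobSq (F * Z0 - B) := by
    rw [hE, frobSq_add]
  have hcross : fip (F * (Z - Z0)) (F * Z0 - B) = (-c) * fip (Z - Z0) Z0 := by
    rw [fip_mul_left, hFtG, fip_smul_right]
  have h2 : frobSq Z = frobSq (Z - Z0) + 2 * fip (Z - Z0) Z0 + frobSq Z0 := by
    conv_lhs => rw [show Z = (Z - Z0) + Z0 by abel]
    rw [frobSq_add]
  have hnn : 0 ≤ (1/(n:ℝ)) * frobSq (F * (Z - Z0)) + lam * frobSq (Z - Z0) := by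
    have h4 := frobSq_nonneg (F * (Z - Z0))
    have h5 := frobSq_nonneg (Z - Z0)
    positivity
  calc lam * fip (T⁻¹ * B) B = (1/(n:ℝ)) * frobSq (F * Z0 - B) + lam * frobSq Z0 := hval.symm
    _ ≤ (1/(n:ℝ)) * frobSq (F * Z0 - B) + lam * frobSq Z0
        + ((1/(n:ℝ)) * frobSq (F * (Z - Z0)) + lam * frobSq (Z - Z0)) := by linarith
    _ = (1/(n:ℝ)) * frobSq (F * Z - B) + lam * frobSq Z := by
        rw [h1, h2, hcross, hc]; field_simp; ring

/-- The PhaseCut objective equals the Frobenius pairing from the core lemma. -/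
lemma bridge {n p : ℕ} (lam : ℝ) (D T' : Matrix (Fin n) (Fin n) ℝ) (hDt : Dᵀ = D)
    (W : Matrix (Fin n) (Fin p) ℝ) :
    mip (lam • (D * T' * D)) (W * Wᵀ) = lam * fip (T' * (D * W)) (D * W) := by
  have h0 : mip (lam • (D * T' * D)) (W * Wᵀ) = fip (lam • (D * T' * D)) (W * Wᵀ) :=
    (fip_eq_trace _ _).symm
  have h2 : lam • (D * T' * D) * W = lam • (D * (T' * (D * W))) := by
    rw [Matrix.smul_mul, Matrix.mul_assoc, Matrix.mul_assoc]
  rw [h0, ← fip_sq, h2, fip_smul_left, fip_mul_left, hDt]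

lemma row_bound {q : ℕ} (t : ℝ) (ht : 0 ≤ t) (a u : Fin q → ℝ) (hu : ∑ j, u j ^ 2 = 1) :
    (Real.sqrt (∑ j, a j ^ 2) - t) ^ 2 ≤ ∑ j, (a j - t * u j) ^ 2 := by
  set s := Real.sqrt (∑ j, a j ^ 2) with hs
  have hs0 : 0 ≤ s := Real.sqrt_nonneg _
  have hs2 : s ^ 2 = ∑ j, a j ^ 2 :=
    Real.sq_sqrt (Finset.sum_nonneg fun j _ => sq_nonneg _)
  have hcs : ∑ j, a j * u j ≤ s := by
    have h1 : (∑ j, a j * u j) ^ 2 ≤ ∑ j, a j ^ 2 := by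
      have := Finset.sum_mul_sq_le_sq_mul_sq Finset.univ a u
      rwa [hu, mul_one] at this
    calc ∑ j, a j * u j ≤ |∑ j, a j * u j| := le_abs_self _
      _ = Real.sqrt ((∑ j, a j * u j) ^ 2) := (Real.sqrt_sq_eq_abs _).symm
      _ ≤ s := by rw [hs]; exact Real.sqrt_le_sqrt h1
  have expand : ∑ j, (a j - t * u j) ^ 2
      = (∑ j, a j ^ 2) - 2 * t * (∑ j, a j * u j) + t ^ 2 := by
    have h : ∀ j ∈ Finset.univ, (a j - t * u j) ^ 2
        = a j ^ 2 - 2 * t * (a j * u j) + t ^ 2 * u j ^ 2 := fun j _ => by ring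
    rw [Finset.sum_congr rfl h, Finset.sum_add_distrib, Finset.sum_sub_distrib,
      ← Finset.mul_sum, ← Finset.mul_sum, hu, mul_one]
  nlinarith [mul_le_mul_of_nonneg_left hcs ht]

lemma pad_sum {r p : ℕ} (hp : r ≤ p) (f : Fin r → ℝ) :
    ∑ j : Fin p, (if h : (j : ℕ) < r then f ⟨j, h⟩ else 0) = ∑ j, f j := by
  set g : ℕ → ℝ := fun m => if h : m < r then f ⟨m, h⟩ else 0 with hg
  have h1 : ∑ j : Fin p, (if h : (j : ℕ) < r then f ⟨j, h⟩ else 0)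
      = ∑ m ∈ Finset.range p, g m := Fin.sum_univ_eq_sum_range g p
  have h2 : ∑ m ∈ Finset.range p, g m = ∑ m ∈ Finset.range r, g m := by
    refine (Finset.sum_subset (Finset.range_subset_range.mpr hp) fun x _ hx => ?_).symm
    have hxr : ¬ x < r := by simpa using hx
    simp [hg, hxr]
  have h3 : ∑ m ∈ Finset.range r, g m = ∑ j : Fin r, f j := by
    rw [← Fin.sum_univ_eq_sum_range g r]
    exact Finset.sum_congr rfl fun j _ => by simp [hg, j.isLt]
  rw [h1, h2, h3]

/-- Guarantee for global minimizers of the PhaseCut problem (with `p ≥ r`):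
`X = R_λ U` satisfies the same inequality as a global optimum of the
regularized amplitude problem. -/
theorem stmt17 {n d p r : ℕ} (hn : 0 < n) (hd : 0 < d) (hr : 0 < r) (hp : r ≤ p)
    (F : Matrix (Fin n) (Fin d) ℝ) (lam : ℝ) (hlam : 0 < lam)
    (Xstar : Matrix (Fin d) (Fin r) ℝ) (ε : Fin n → ℝ)
    (y : Fin n → ℝ) (hy_def : ∀ i, y i = rowNorms (F * Xstar) i + ε i)
    (hy : ∀ i, 0 ≤ y i)
    (Ustar : Matrix (Fin n) (Fin r) ℝ)
    (hUstar : ∀ i, ∑ j, (Ustar i j) ^ 2 = 1)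
    (hUstar_def : F * Xstar = Matrix.diagonal (rowNorms (F * Xstar)) * Ustar)
    (Mlam : Matrix (Fin n) (Fin n) ℝ)
    (hMlam : Mlam = lam • (Matrix.diagonal y
        * (((n:ℝ) * lam) • (1 : Matrix (Fin n) (Fin n) ℝ) + F * Fᵀ)⁻¹
        * Matrix.diagonal y))
    (Rlam : Matrix (Fin d) (Fin n) ℝ)
    (hRlam : Rlam = (((n:ℝ) * lam) • (1 : Matrix (Fin d) (Fin d) ℝ) + Fᵀ * F)⁻¹
        * Fᵀ * Matrix.diagonal y)
    (U : Matrix (Fin n) (Fin p) ℝ) (hU : ∀ i, ∑ j, (U i j) ^ 2 = 1)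
    (hopt : ∀ U' : Matrix (Fin n) (Fin p) ℝ, (∀ i, ∑ j, (U' i j) ^ 2 = 1) →
      mip Mlam (U * Uᵀ) ≤ mip Mlam (U' * U'ᵀ))
    (X : Matrix (Fin d) (Fin p) ℝ) (hX : X = Rlam * U) :
    (1 / (n:ℝ)) * vnormSq (rowNorms (F * X) - rowNorms (F * Xstar)) ≤
      (2 / (n:ℝ)) * vip ε (rowNorms (F * X) - rowNorms (F * Xstar))
      + lam * (frobSq Xstar - frobSq X) := by
  have hn' : (0:ℝ) < n := by exact_mod_cast hn
  obtain ⟨valU, _⟩ := core hn F hlam (Matrix.diagonal y * U)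
  have hXeq : X = (((n:ℝ) * lam) • (1 : Matrix (Fin d) (Fin d) ℝ) + Fᵀ * F)⁻¹ * Fᵀ
      * (Matrix.diagonal y * U) := by
    rw [hX, hRlam, Matrix.mul_assoc]
  rw [← hXeq] at valU
  have bridgeU : mip Mlam (U * Uᵀ)
      = lam * fip ((((n:ℝ) * lam) • (1 : Matrix (Fin n) (Fin n) ℝ) + F * Fᵀ)⁻¹
          * (Matrix.diagonal y * U)) (Matrix.diagonal y * U) := by
    rw [hMlam]; exact bridge lam _ _ (Matrix.diagonal_transpose y) U
  -- padded matrices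
  set U' : Matrix (Fin n) (Fin p) ℝ :=
    (fun i j => if h : (j : ℕ) < r then Ustar i ⟨j, h⟩ else 0) with hU'def
  set Xp : Matrix (Fin d) (Fin p) ℝ :=
    (fun i j => if h : (j : ℕ) < r then Xstar i ⟨j, h⟩ else 0) with hXpdef
  have hU' : ∀ i, ∑ j, (U' i j) ^ 2 = 1 := by
    intro i
    have hsq : ∀ j : Fin p, (U' i j) ^ 2
        = (if h : (j : ℕ) < r then (Ustar i ⟨j, h⟩) ^ 2 else 0) := by
      intro j; by_cases h : (j : ℕ) < r <;> simp [hU'def, h]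
    calc ∑ j, (U' i j) ^ 2
        = ∑ j : Fin p, (if h : (j : ℕ) < r then (Ustar i ⟨j, h⟩) ^ 2 else 0) :=
          Finset.sum_congr rfl fun j _ => hsq j
      _ = ∑ j : Fin r, Ustar i j ^ 2 := pad_sum hp (fun k => Ustar i k ^ 2)
      _ = 1 := hUstar i
  obtain ⟨_, optU'⟩ := core hn F hlam (Matrix.diagonal y * U')
  have bridgeU' : mip Mlam (U' * U'ᵀ)
      = lam * fip ((((n:ℝ) * lam) • (1 : Matrix (Fin n) (Fin n) ℝ) + F * Fᵀ)⁻¹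
          * (Matrix.diagonal y * U')) (Matrix.diagonal y * U') := by
    rw [hMlam]; exact bridge lam _ _ (Matrix.diagonal_transpose y) U'
  -- entries of the padded residual
  have hent : ∀ i j, (F * Xp - Matrix.diagonal y * U') i j
      = (if h : (j : ℕ) < r then (-(ε i)) * Ustar i ⟨j, h⟩ else 0) := by
    intro i j
    have hmulXp : (F * Xp) i j = (if h : (j : ℕ) < r then (F * Xstar) i ⟨j, h⟩ else 0) := by
      by_cases h : (j : ℕ) < r
      · rw [Matrix.mul_apply]; simp [Matrix.mul_apply, hXpdef, h]
      · rw [Matrix.mul_apply]; simp [Matrix.mul_apply, hXpdef, h]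
    have hDU' : (Matrix.diagonal y * U') i j
        = (if h : (j : ℕ) < r then y i * Ustar i ⟨j, h⟩ else 0) := by
      by_cases h : (j : ℕ) < r <;> rw [Matrix.diagonal_mul] <;> simp [Matrix.diagonal_mul, hU'def, h]
    rw [Matrix.sub_apply, hmulXp, hDU']
    by_cases h : (j : ℕ) < r
    · rw [dif_pos h, dif_pos h, dif_pos h]
      have h1 : (F * Xstar) i ⟨(j : ℕ), h⟩
          = rowNorms (F * Xstar) i * Ustar i ⟨(j : ℕ), h⟩ := by
        conv_lhs => rw [hUstar_def]
        rw [Matrix.diagonal_mul]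
      rw [h1, hy_def i]; ring
    · simp [h]
  have hfrobpad : frobSq (F * Xp - Matrix.diagonal y * U') = ∑ i, ε i ^ 2 := by
    refine Finset.sum_congr rfl fun i _ => ?_
    have hsq : ∀ j : Fin p, ((F * Xp - Matrix.diagonal y * U') i j) ^ 2
        = (if h : (j : ℕ) < r then ((-(ε i)) * Ustar i ⟨j, h⟩) ^ 2 else 0) := by
      intro j; rw [hent i j]; by_cases h : (j : ℕ) < r <;> simp [h]
    have hterm : ∀ j ∈ Finset.univ, ((-(ε i)) * Ustar i j) ^ 2 = ε i ^ 2 * Ustar i j ^ 2 :=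
      fun j _ => by ring
    calc ∑ j, ((F * Xp - Matrix.diagonal y * U') i j) ^ 2
        = ∑ j : Fin p, (if h : (j : ℕ) < r then ((-(ε i)) * Ustar i ⟨j, h⟩) ^ 2 else 0) :=
          Finset.sum_congr rfl fun j _ => hsq j
      _ = ∑ j : Fin r, ((-(ε i)) * Ustar i j) ^ 2 :=
          pad_sum hp (fun k => ((-(ε i)) * Ustar i k) ^ 2)
      _ = ε i ^ 2 := by
          rw [Finset.sum_congr rfl hterm, ← Finset.mul_sum, hUstar i, mul_one]
  have hfrobXp : frobSq Xp = frobSq Xstar := by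
    refine Finset.sum_congr rfl fun i _ => ?_
    have hsq : ∀ j : Fin p, (Xp i j) ^ 2
        = (if h : (j : ℕ) < r then (Xstar i ⟨j, h⟩) ^ 2 else 0) := by
      intro j; by_cases h : (j : ℕ) < r <;> simp [hXpdef, h]
    calc ∑ j, (Xp i j) ^ 2
        = ∑ j : Fin p, (if h : (j : ℕ) < r then (Xstar i ⟨j, h⟩) ^ 2 else 0) :=
          Finset.sum_congr rfl fun j _ => hsq j
      _ = ∑ j : Fin r, Xstar i j ^ 2 := pad_sum hp (fun k => Xstar i k ^ 2)
  -- row-wise bound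
  have hrow : ∀ i, (rowNorms (F * X) i - y i) ^ 2
      ≤ ∑ j, ((F * X - Matrix.diagonal y * U) i j) ^ 2 := by
    intro i
    have h := row_bound (y i) (hy i) (fun j => (F * X) i j) (fun j => U i j) (hU i)
    simpa [rowNorms, Matrix.sub_apply, Matrix.diagonal_mul] using h
  have hsum1 : ∑ i, (rowNorms (F * X) i - y i) ^ 2 ≤ frobSq (F * X - Matrix.diagonal y * U) :=
    Finset.sum_le_sum fun i _ => hrow i
  -- main chain
  have hmain : (1/(n:ℝ)) * (∑ i, (rowNorms (F * X) i - y i) ^ 2) + lam * frobSq X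
      ≤ (1/(n:ℝ)) * (∑ i, ε i ^ 2) + lam * frobSq Xstar := by
    have t0 : (0:ℝ) ≤ 1/(n:ℝ) := by positivity
    have t1 : (1/(n:ℝ)) * (∑ i, (rowNorms (F * X) i - y i) ^ 2)
        ≤ (1/(n:ℝ)) * frobSq (F * X - Matrix.diagonal y * U) :=
      mul_le_mul_of_nonneg_left hsum1 t0
    have t6 := optU' Xp
    rw [hfrobpad, hfrobXp] at t6
    have t4 := hopt U' hU'
    linarith [valU, bridgeU, bridgeU', t1, t4, t6]
  -- final rearrangement
  have hsplit : ∑ i, (rowNorms (F * X) i - y i) ^ 2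
      = vnormSq (rowNorms (F * X) - rowNorms (F * Xstar))
        - 2 * vip ε (rowNorms (F * X) - rowNorms (F * Xstar)) + ∑ i, ε i ^ 2 := by
    simp only [vnormSq, vip, Pi.sub_apply, Finset.mul_sum, ← Finset.sum_add_distrib,
      ← Finset.sum_sub_distrib]
    exact Finset.sum_congr rfl fun i _ => by rw [hy_def i]; ring
  rw [hsplit] at hmain
  have hexpand : (1/(n:ℝ)) * (vnormSq (rowNorms (F * X) - rowNorms (F * Xstar))
        - 2 * vip ε (rowNorms (F * X) - rowNorms (F * Xstar)) + ∑ i, ε i ^ 2)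
      = (1/(n:ℝ)) * vnormSq (rowNorms (F * X) - rowNorms (F * Xstar))
        - 2 * ((1/(n:ℝ)) * vip ε (rowNorms (F * X) - rowNorms (F * Xstar)))
        + (1/(n:ℝ)) * (∑ i, ε i ^ 2) := by ring
  have h2n : (2/(n:ℝ)) * vip ε (rowNorms (F * X) - rowNorms (F * Xstar))
      = 2 * ((1/(n:ℝ)) * vip ε (rowNorms (F * X) - rowNorms (F * Xstar))) := by ring
  have hlamdist : lam * (frobSq Xstar - frobSq X) = lam * frobSq Xstar - lam * frobSq X := by
    ring
  linarith [hmain, hexpand, h2n, hlamdist]
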